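/- arXiv:1812.05651 — 3 statements merged into one kernel-verified Lean document; each statement's English description precedes it below -/
import Mathlib

section
/- Let n be an odd positive integer and let k be a finite field with 3^n elements (so k has characteristic 3). Then the number of pairs (x, y) ∈ k × k satisfying y^2 = x^3 - x is exactly 3^n. -/
open Finset

/-- Let `n` be an odd positive integer and `k` a finite field with `3 ^ n` elements.
Then the number of pairs `(x, y) ∈ k × k` with `y ^ 2 = x ^ 3 - x` is exactly `3 ^ n`. -/
theorem count_points_y_sq_eq_x_cubed_sub_x_odd
    (n : ℕ) (hn : 0 < n) (hodd : Odd n)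
    (k : Type*) [Field k] [Fintype k] (hcard : Fintype.card k = 3 ^ n) :
    Nat.card {p : k × k // p.2 ^ 2 = p.1 ^ 3 - p.1} = 3 ^ n := by
  classical
  have h2 : ringChar k ≠ 2 := by
    rw [Ne, FiniteField.even_card_iff_char_two, hcard]
    simp [Nat.pow_mod]
  have hmod : Fintype.card k % 4 = 3 := by
    rw [hcard]
    obtain ⟨m, rfl⟩ := hodd
    rw [pow_succ, pow_mul, Nat.mul_mod, Nat.pow_mod]
    norm_num
  have hneg1 : quadraticChar k (-1) = -1 := by
    rw [quadraticChar_neg_one_iff_not_isSquare, FiniteField.isSquare_neg_one_iff]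
    simp [hmod]
  -- reduce to a sum over x
  have e : {p : k × k // p.2 ^ 2 = p.1 ^ 3 - p.1} ≃ Σ x : k, {y : k // y ^ 2 = x ^ 3 - x} :=
    { toFun := fun p => ⟨p.1.1, p.1.2, p.2⟩
      invFun := fun s => ⟨⟨s.1, s.2.1⟩, s.2.2⟩
      left_inv := fun p => rfl
      right_inv := fun s => rfl }
  rw [Nat.card_eq_fintype_card, Fintype.card_congr e, Fintype.card_sigma]
  -- express each fiber count via the quadratic character
  have hfib : ∀ x : k, (Fintype.card {y : k // y ^ 2 = x ^ 3 - x} : ℤ)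
      = quadraticChar k (x ^ 3 - x) + 1 := by
    intro x
    rw [← quadraticChar_card_sqrts h2 (x ^ 3 - x)]
    congr 1
    rw [Set.toFinset_card]
    exact Fintype.card_congr (Equiv.refl _)
  have hsum : ∑ x : k, quadraticChar k (x ^ 3 - x) = 0 := by
    have hre : ∑ x : k, quadraticChar k (x ^ 3 - x)
        = ∑ x : k, quadraticChar k ((-x) ^ 3 - (-x)) :=
      Fintype.sum_equiv (Equiv.neg k) _ _ (fun x => by simp)
    have : ∀ x : k, quadraticChar k ((-x) ^ 3 - (-x)) = - quadraticChar k (x ^ 3 - x) := by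
      intro x
      have : (-x) ^ 3 - (-x) = (-1) * (x ^ 3 - x) := by ring
      rw [this, map_mul, hneg1, neg_one_mul]
    rw [Finset.sum_congr rfl (fun x _ => this x)] at hre
    rw [Finset.sum_neg_distrib] at hre
    omega
  have : (∑ x : k, (Fintype.card {y : k // y ^ 2 = x ^ 3 - x} : ℤ))
      = Fintype.card k := by
    simp_rw [hfib]
    rw [Finset.sum_add_distrib, hsum, zero_add]
    simp
  have := this
  push_cast at this
  have h3 : (∑ x : k, Fintype.card {y : k // y ^ 2 = x ^ 3 - x}) = Fintype.card k := by
    exact_mod_cast this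
  rw [h3, hcard]
end

section
/- The group with presentation ⟨a, b, c | a^3 = b^4 = c^2 = 1, b a b^{-1} = a^{-1}, c a c = a^{-1}, c b c = b^{-1}⟩ has exactly 24 elements. -/
/-!
Every element is a normal form `a ^ i * b ^ j * c ^ k` with `(i, j, k) : ZMod 3 × ZMod 4 × ZMod 2`:
since `b` and `c` invert `a` and `c` inverts `b`, left multiplication by `a`, `b`, `c` maps normal
forms to normal forms by `(i, j, k) ↦ (i + 1, j, k)`, `(-i, j + 1, k)`, `(-i, -j, k + 1)`. These
three permutations of the 24 triples satisfy the defining relations, so the group acts on the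
triples, and the orbit map `g ↦ g • (0, 0, 0)` inverts the normal form map.
-/

/-- Relators for the presentation
`⟨a, b, c | a³ = b⁴ = c² = 1, bab⁻¹ = a⁻¹, cac = a⁻¹, cbc = b⁻¹⟩`,
with `a, b, c` the generators indexed by `0, 1, 2` respectively. -/
def c3rd4Rels : Set (FreeGroup (Fin 3)) :=
  {FreeGroup.of 0 ^ 3, FreeGroup.of 1 ^ 4, FreeGroup.of 2 ^ 2,
    FreeGroup.of 1 * FreeGroup.of 0 * (FreeGroup.of 1)⁻¹ * FreeGroup.of 0,
    FreeGroup.of 2 * FreeGroup.of 0 * FreeGroup.of 2 * FreeGroup.of 0,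
    FreeGroup.of 2 * FreeGroup.of 1 * FreeGroup.of 2 * FreeGroup.of 1}

section ZModPow

variable {M : Type*} [Monoid M] {x : M} {n : ℕ} [NeZero n]

theorem pow_zmod_val_add (hx : x ^ n = 1) (u v : ZMod n) :
    x ^ (u + v).val = x ^ u.val * x ^ v.val := by
  rw [ZMod.val_add, ← pow_eq_pow_mod _ hx, pow_add]

theorem pow_zmod_val_add_one (hx : x ^ n = 1) (u : ZMod n) :
    x ^ (u + 1).val = x * x ^ u.val := by
  rw [add_comm, pow_zmod_val_add hx, ZMod.val_one_eq_one_mod, ← pow_eq_pow_mod _ hx, pow_one]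

theorem pow_zmod_val_neg {G : Type*} [Group G] {x : G} (hx : x ^ n = 1) (u : ZMod n) :
    x ^ (-u).val = x⁻¹ ^ u.val := by
  rw [inv_pow, eq_inv_iff_mul_eq_one, ← pow_zmod_val_add hx, neg_add_cancel, ZMod.val_zero,
    pow_zero]

end ZModPow

theorem mul_pow_eq_inv_pow_mul {G : Type*} [Group G] {x y : G} (h : x * y * x⁻¹ = y⁻¹) (n : ℕ) :
    x * y ^ n = y⁻¹ ^ n * x := by
  rw [← h, conj_pow, inv_mul_cancel_right]

theorem apply_map_apply_eq_mul_of_closure_eq_top {G X : Type*} [Group G] (ψ : G →* Equiv.Perm X)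
    (f : X → G) {S : Set G} (hS : Subgroup.closure S = ⊤)
    (hf : ∀ s ∈ S, ∀ x, f (ψ s x) = s * f x) (g : G) (x : X) : f (ψ g x) = g * f x := by
  induction (hS ▸ Subgroup.mem_top g : g ∈ Subgroup.closure S) using
    Subgroup.closure_induction_left generalizing x with
  | one => simp
  | mul_left s hs y _ ih => rw [map_mul, Equiv.Perm.mul_apply, hf s hs, ih, mul_assoc]
  | inv_mul_cancel s hs y _ ih =>
    have h := hf s hs (ψ (s⁻¹ * y) x)
    rw [← Equiv.Perm.mul_apply, ← map_mul, mul_inv_cancel_left, ih] at h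
    rw [mul_assoc, eq_inv_mul_iff_mul_eq, h]

namespace C3rD4

def a : PresentedGroup c3rd4Rels := .of 0
def b : PresentedGroup c3rd4Rels := .of 1
def c : PresentedGroup c3rd4Rels := .of 2

theorem a_pow_three : a ^ 3 = 1 :=
  PresentedGroup.one_of_mem (x := FreeGroup.of 0 ^ 3) (by simp [c3rd4Rels])

theorem b_pow_four : b ^ 4 = 1 :=
  PresentedGroup.one_of_mem (x := FreeGroup.of 1 ^ 4) (by simp [c3rd4Rels])

theorem c_pow_two : c ^ 2 = 1 :=
  PresentedGroup.one_of_mem (x := FreeGroup.of 2 ^ 2) (by simp [c3rd4Rels])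

theorem c_inv : c⁻¹ = c :=
  inv_eq_of_mul_eq_one_right (pow_two c ▸ c_pow_two)

theorem b_mul_a_mul_b_inv : b * a * b⁻¹ = a⁻¹ :=
  mul_eq_one_iff_eq_inv.mp <| PresentedGroup.one_of_mem
    (x := FreeGroup.of 1 * FreeGroup.of 0 * (FreeGroup.of 1)⁻¹ * FreeGroup.of 0)
    (by simp [c3rd4Rels])

theorem c_mul_a_mul_c_inv : c * a * c⁻¹ = a⁻¹ := by
  rw [c_inv]
  exact mul_eq_one_iff_eq_inv.mp (PresentedGroup.one_of_mem
    (x := FreeGroup.of 2 * FreeGroup.of 0 * FreeGroup.of 2 * FreeGroup.of 0)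
    (by simp [c3rd4Rels]))

theorem c_mul_b_mul_c_inv : c * b * c⁻¹ = b⁻¹ := by
  rw [c_inv]
  exact mul_eq_one_iff_eq_inv.mp (PresentedGroup.one_of_mem
    (x := FreeGroup.of 2 * FreeGroup.of 1 * FreeGroup.of 2 * FreeGroup.of 1)
    (by simp [c3rd4Rels]))

abbrev NormalForm := ZMod 3 × ZMod 4 × ZMod 2

def word (p : NormalForm) : PresentedGroup c3rd4Rels :=
  a ^ p.1.val * b ^ p.2.1.val * c ^ p.2.2.val

def permA : Equiv.Perm NormalForm where
  toFun p := (p.1 + 1, p.2.1, p.2.2)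
  invFun p := (p.1 - 1, p.2.1, p.2.2)
  left_inv p := by simp
  right_inv p := by simp

def permB : Equiv.Perm NormalForm where
  toFun p := (-p.1, p.2.1 + 1, p.2.2)
  invFun p := (-p.1, p.2.1 - 1, p.2.2)
  left_inv p := by simp
  right_inv p := by simp

def permC : Equiv.Perm NormalForm where
  toFun p := (-p.1, -p.2.1, p.2.2 + 1)
  invFun p := (-p.1, -p.2.1, p.2.2 - 1)
  left_inv p := by simp
  right_inv p := by simp

theorem a_mul_word (p : NormalForm) : a * word p = word (permA p) := by
  simp only [word, permA, Equiv.coe_fn_mk, pow_zmod_val_add_one a_pow_three, mul_assoc]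

theorem b_mul_word (p : NormalForm) : b * word p = word (permB p) := by
  simp only [word, permB, Equiv.coe_fn_mk, pow_zmod_val_add_one b_pow_four,
    pow_zmod_val_neg a_pow_three, ← mul_assoc, mul_pow_eq_inv_pow_mul b_mul_a_mul_b_inv]

theorem c_mul_word (p : NormalForm) : c * word p = word (permC p) := by
  simp only [word, permC, Equiv.coe_fn_mk, pow_zmod_val_add_one c_pow_two,
    pow_zmod_val_neg a_pow_three, pow_zmod_val_neg b_pow_four, ← mul_assoc,
    mul_pow_eq_inv_pow_mul c_mul_a_mul_c_inv]
  simp only [mul_assoc, mul_pow_eq_inv_pow_mul c_mul_b_mul_c_inv]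

theorem lift_perms_eq_one_of_mem :
    ∀ r ∈ c3rd4Rels, FreeGroup.lift ![permA, permB, permC] r = 1 := by
  simp only [c3rd4Rels, Set.mem_insert_iff, Set.mem_singleton_iff, forall_eq_or_imp, forall_eq,
    map_mul, map_pow, map_inv, FreeGroup.lift_apply_of, Matrix.cons_val]
  refine ⟨?_, ?_, ?_, ?_, ?_, ?_⟩ <;> decide

def toPerm : PresentedGroup c3rd4Rels →* Equiv.Perm NormalForm :=
  PresentedGroup.toGroup lift_perms_eq_one_of_mem

theorem word_toPerm_apply (g : PresentedGroup c3rd4Rels) (p : NormalForm) :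
    word (toPerm g p) = g * word p := by
  refine apply_map_apply_eq_mul_of_closure_eq_top toPerm word
    (PresentedGroup.closure_range_of _) ?_ g p
  rintro _ ⟨i, rfl⟩ p
  fin_cases i
  exacts [(a_mul_word p).symm, (b_mul_word p).symm, (c_mul_word p).symm]

theorem toPerm_word_apply_zero (p : NormalForm) : toPerm (word p) 0 = p := by
  simp only [word, toPerm, map_mul, map_pow, PresentedGroup.toGroup.of, Matrix.cons_val, a, b, c]
  revert p
  decide

def wordEquiv : NormalForm ≃ PresentedGroup c3rd4Rels where
  toFun := word
  invFun g := toPerm g 0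
  left_inv := toPerm_word_apply_zero
  right_inv g := by
    rw [word_toPerm_apply, show word 0 = 1 by simp [word], mul_one]

end C3rD4

/-- The group `⟨a, b, c | a³ = b⁴ = c² = 1, bab⁻¹ = a⁻¹, cac = a⁻¹, cbc = b⁻¹⟩`
(abstractly `C₃ ⋊ D₄`) has exactly 24 elements. -/
theorem card_c3rd4_presentation : Nat.card (PresentedGroup c3rd4Rels) = 24 := by
  rw [← Nat.card_congr C3rD4.wordEquiv]
  simp
end

section
/- Let ρ₁ and ρ₂ be two faithful irreducible 2-dimensional complex representations of the dicyclic group of order 12 (Mathlib's QuaternionGroup 3). Then ρ₁ and ρ₂ are isomorphic: there exists a ℂ-linear automorphism T of ℂ^2 such that T ∘ ρ₁(g) = ρ₂(g) ∘ T for all g in QuaternionGroup 3. -/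
open QuaternionGroup

private lemma QG3.gen_prop (P : QuaternionGroup 3 → Prop)
    (hmul : ∀ g h, P g → P h → P (g * h)) (h1 : P 1)
    (ha : P (a 1)) (hx : P (xa 0)) : ∀ g, P g := by
  have hpow : ∀ k : ℕ, P (a 1 ^ k) := by
    intro k
    induction k with
    | zero => simpa using h1
    | succ n ih => rw [pow_succ]; exact hmul _ _ ih ha
  have haa : ∀ i : ZMod (2 * 3), P (a i) := by
    intro i
    have := hpow i.val
    rwa [a_one_pow, ZMod.natCast_rightInverse i] at this
  intro g
  rcases g with i | i
  · exact haa i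
  · have h : (a (-i) : QuaternionGroup 3) * xa 0 = xa i := by simp
    exact h ▸ hmul _ _ (haa (-i)) hx

private lemma QG3.pow_eig (f : Module.End ℂ (Fin 2 → ℂ)) {μ : ℂ} {v : Fin 2 → ℂ}
    (h : f v = μ • v) (k : ℕ) : (f ^ k) v = μ ^ k • v := by
  induction k with
  | zero => simp
  | succ n ih =>
    rw [pow_succ, Module.End.mul_apply, h, map_smul, ih, smul_smul, ← pow_succ']

private lemma QG3.swap_indep {v w : Fin 2 → ℂ} (h : LinearIndependent ℂ ![v, w]) :
    LinearIndependent ℂ ![w, -v] := by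
  rw [linearIndependent_fin2] at h ⊢
  simp only [Matrix.cons_val_one, Matrix.head_cons, Matrix.cons_val_zero] at h ⊢
  obtain ⟨hw0, hvw⟩ := h
  refine ⟨fun h0 => (hvw 0) (by simp [neg_eq_zero.mp h0]), fun c hc => ?_⟩
  rcases eq_or_ne c 0 with rfl | hc0
  · exact hw0 (by simpa using hc.symm)
  · apply hvw (-c)⁻¹
    have : v = (-c)⁻¹ • w := by
      rw [← hc, smul_smul, inv_neg, neg_mul, inv_mul_cancel₀ hc0]
      simp
    exact this.symm

private lemma QG3.key (ρ : Representation ℂ (QuaternionGroup 3) (Fin 2 → ℂ))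
    (hf : Function.Injective ρ)
    (hirr : ∀ p : Submodule ℂ (Fin 2 → ℂ),
      (∀ g : QuaternionGroup 3, ∀ x ∈ p, ρ g x ∈ p) → p = ⊥ ∨ p = ⊤) :
    ∃ (μ : ℂ) (v w : Fin 2 → ℂ),
      μ ^ 3 = -1 ∧ μ ^ 4 + μ ^ 2 + 1 = 0 ∧
      LinearIndependent ℂ ![v, w] ∧
      ρ (a 1) v = μ • v ∧ ρ (a 1) w = μ ^ 5 • w ∧
      ρ (xa 0) v = w ∧ ρ (xa 0) w = -v := by
  obtain ⟨μ, hμ⟩ := Module.End.exists_eigenvalue (ρ (a 1))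
  obtain ⟨v, hv⟩ := hμ.exists_hasEigenvector
  have hv0 : v ≠ 0 := hv.right
  have hAv : ρ (a 1) v = μ • v := hv.apply_eq_smul
  set w : Fin 2 → ℂ := ρ (xa 0) v with hw
  -- μ ^ 6 = 1
  have h6 : μ ^ 6 = 1 := by
    have h1 : ρ (a 1 ^ 6) v = μ ^ 6 • v := by rw [map_pow]; exact QG3.pow_eig _ hAv 6
    have h2 : (a 1 : QuaternionGroup 3) ^ 6 = 1 := by decide
    rw [h2, map_one] at h1
    have h3 : (μ ^ 6 - 1) • v = 0 := by
      rw [sub_smul, one_smul, ← h1]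
      simp
    rcases smul_eq_zero.mp h3 with h | h
    · exact sub_eq_zero.mp h
    · exact absurd h hv0
  -- eigen equation for w
  have hAw : ρ (a 1) w = μ ^ 5 • w := by
    have e1 : (a 1 : QuaternionGroup 3) * xa 0 = xa 0 * a 1 ^ 5 := by decide
    have h1 : ρ (a 1) (ρ (xa 0) v) = ρ (xa 0) (ρ (a 1 ^ 5) v) := by
      rw [← Module.End.mul_apply, ← map_mul, e1, map_mul, Module.End.mul_apply]
    have h2 : ρ (a 1 ^ 5) v = μ ^ 5 • v := by rw [map_pow]; exact QG3.pow_eig _ hAv 5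
    rw [h2, map_smul] at h1
    exact h1
  have hBw : ρ (xa 0) w = μ ^ 3 • v := by
    have e2 : (xa 0 : QuaternionGroup 3) * xa 0 = a 1 ^ 3 := by decide
    have h1 : ρ (xa 0) (ρ (xa 0) v) = ρ (a 1 ^ 3) v := by
      rw [← Module.End.mul_apply, ← map_mul, e2]
    have h2 : ρ (a 1 ^ 3) v = μ ^ 3 • v := by rw [map_pow]; exact QG3.pow_eig _ hAv 3
    rw [h2] at h1
    exact h1
  -- the span of v, w is invariant, hence everything
  set p : Submodule ℂ (Fin 2 → ℂ) := Submodule.span ℂ {v, w} with hp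
  have hvp : v ∈ p := Submodule.subset_span (by simp)
  have hwp : w ∈ p := Submodule.subset_span (by simp)
  have hgen : ∀ (f : Module.End ℂ (Fin 2 → ℂ)), f v ∈ p → f w ∈ p → ∀ x ∈ p, f x ∈ p := by
    intro f h1 h2 x hx
    have hle : p ≤ Submodule.comap f p := by
      rw [hp, Submodule.span_le]
      rintro y hy
      simp only [Set.mem_insert_iff, Set.mem_singleton_iff] at hy
      rcases hy with rfl | rfl
      · exact h1
      · exact h2
    exact hle hx
  have hinv : ∀ g : QuaternionGroup 3, ∀ x ∈ p, ρ g x ∈ p := by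
    refine QG3.gen_prop (fun g => ∀ x ∈ p, ρ g x ∈ p) ?_ ?_ ?_ ?_
    · intro g h hg hh x hx
      rw [map_mul, Module.End.mul_apply]
      exact hg _ (hh x hx)
    · intro x hx; simpa using hx
    · refine hgen _ ?_ ?_
      · rw [hAv]; exact Submodule.smul_mem _ _ hvp
      · rw [hAw]; exact Submodule.smul_mem _ _ hwp
    · refine hgen _ ?_ ?_
      · exact hwp
      · rw [hBw]; exact Submodule.smul_mem _ _ hvp
  have htop : p = ⊤ := by
    refine (hirr p hinv).resolve_left fun h => hv0 ?_
    rw [h] at hvp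
    simpa using hvp
  have hcard : Fintype.card (Fin 2) = Module.finrank ℂ (Fin 2 → ℂ) := by simp
  have hind : LinearIndependent ℂ ![v, w] := by
    apply linearIndependent_of_top_le_span_of_card_eq_finrank _ hcard
    rw [show Set.range ![v, w] = {v, w} by
      ext y; simp [Matrix.range_cons, Matrix.range_empty, or_comm]]
    rw [← hp, htop]
  -- basis and extensionality
  let b := basisOfLinearIndependentOfCardEqFinrank hind hcard
  have hb0 : b 0 = v := by simp [b]
  have hb1 : b 1 = w := by simp [b]
  have hext : ∀ f g : Module.End ℂ (Fin 2 → ℂ), f v = g v → f w = g w → f = g := by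
    intro f g h1 h2
    apply b.ext
    intro i
    fin_cases i
    · rw [show b ⟨0, by norm_num⟩ = v from hb0, h1]
    · rw [show b ⟨1, by norm_num⟩ = w from hb1, h2]
  -- μ ^ 3 = -1
  have h3ne : μ ^ 3 ≠ 1 := by
    intro h
    have e1 : ρ (a 1 ^ 3) v = v := by
      rw [map_pow, QG3.pow_eig _ hAv 3, h, one_smul]
    have e2 : ρ (a 1 ^ 3) w = w := by
      rw [map_pow, QG3.pow_eig _ hAw 3, show ((μ : ℂ) ^ 5) ^ 3 = (μ ^ 3) ^ 5 by ring, h]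
      simp
    have : ρ (a 1 ^ 3) = ρ 1 := by
      rw [map_one]
      exact hext _ _ (by simpa using e1) (by simpa using e2)
    have h31 : (a 1 : QuaternionGroup 3) ^ 3 = 1 := hf this
    exact absurd h31 (by decide)
  have h3 : μ ^ 3 = -1 := by
    have hm : (μ ^ 3 - 1) * (μ ^ 3 + 1) = 0 := by linear_combination h6
    rcases mul_eq_zero.mp hm with h | h
    · exact absurd (sub_eq_zero.mp h) h3ne
    · linear_combination h
  -- μ ^ 2 ≠ 1
  have h2ne : μ ^ 2 ≠ 1 := by
    intro h2
    have h5 : μ ^ 5 = μ := by linear_combination (μ ^ 3 + μ) * h2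
    have hA1 : ρ (a 1) = μ • (1 : Module.End ℂ (Fin 2 → ℂ)) := by
      refine hext _ _ ?_ ?_
      · rw [hAv]; simp
      · rw [hAw, h5]; simp
    obtain ⟨ν, hν⟩ := Module.End.exists_eigenvalue (ρ (xa 0))
    obtain ⟨u, hu⟩ := hν.exists_hasEigenvector
    have hu0 : u ≠ 0 := hu.right
    have hBu : ρ (xa 0) u = ν • u := hu.apply_eq_smul
    set q : Submodule ℂ (Fin 2 → ℂ) := Submodule.span ℂ {u} with hq
    have hup : u ∈ q := Submodule.mem_span_singleton_self u
    have hqinv : ∀ g : QuaternionGroup 3, ∀ x ∈ q, ρ g x ∈ q := by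
      refine QG3.gen_prop (fun g => ∀ x ∈ q, ρ g x ∈ q) ?_ ?_ ?_ ?_
      · intro g h hg hh x hx
        rw [map_mul, Module.End.mul_apply]
        exact hg _ (hh x hx)
      · intro x hx; simpa using hx
      · intro x hx
        rw [hA1]
        simpa using Submodule.smul_mem _ μ hx
      · intro x hx
        rw [hq, Submodule.mem_span_singleton] at hx
        obtain ⟨c, rfl⟩ := hx
        rw [map_smul, hBu, smul_smul]
        exact Submodule.smul_mem _ _ hup
    rcases hirr q hqinv with h | h
    · exact hu0 (by rw [h] at hup; simpa using hup)
    · have h1 : Module.finrank ℂ q = 1 := finrank_span_singleton hu0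
      rw [h, finrank_top] at h1
      simp at h1
  have hq4 : μ ^ 4 + μ ^ 2 + 1 = 0 := by
    have hm : (μ ^ 2 - 1) * (μ ^ 4 + μ ^ 2 + 1) = 0 := by linear_combination h6
    rcases mul_eq_zero.mp hm with h | h
    · exact absurd (sub_eq_zero.mp h) h2ne
    · exact h
  exact ⟨μ, v, w, h3, hq4, hind, hAv, hAw, rfl, by rw [hBw, h3, neg_one_smul]⟩

private lemma QG3.build (ρ₁ ρ₂ : Representation ℂ (QuaternionGroup 3) (Fin 2 → ℂ))
    (μ : ℂ) (v₁ w₁ v₂ w₂ : Fin 2 → ℂ)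
    (hi₁ : LinearIndependent ℂ ![v₁, w₁]) (hi₂ : LinearIndependent ℂ ![v₂, w₂])
    (hA₁v : ρ₁ (a 1) v₁ = μ • v₁) (hA₁w : ρ₁ (a 1) w₁ = μ ^ 5 • w₁)
    (hB₁v : ρ₁ (xa 0) v₁ = w₁) (hB₁w : ρ₁ (xa 0) w₁ = -v₁)
    (hA₂v : ρ₂ (a 1) v₂ = μ • v₂) (hA₂w : ρ₂ (a 1) w₂ = μ ^ 5 • w₂)
    (hB₂v : ρ₂ (xa 0) v₂ = w₂) (hB₂w : ρ₂ (xa 0) w₂ = -v₂) :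
    ∃ T : (Fin 2 → ℂ) ≃ₗ[ℂ] (Fin 2 → ℂ),
      ∀ (g : QuaternionGroup 3) (x : Fin 2 → ℂ), T (ρ₁ g x) = ρ₂ g (T x) := by
  have hcard : Fintype.card (Fin 2) = Module.finrank ℂ (Fin 2 → ℂ) := by simp
  let b₁ := basisOfLinearIndependentOfCardEqFinrank hi₁ hcard
  let b₂ := basisOfLinearIndependentOfCardEqFinrank hi₂ hcard
  have hb₁0 : b₁ 0 = v₁ := by simp [b₁]
  have hb₁1 : b₁ 1 = w₁ := by simp [b₁]
  have hb₂0 : b₂ 0 = v₂ := by simp [b₂]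
  have hb₂1 : b₂ 1 = w₂ := by simp [b₂]
  let T : (Fin 2 → ℂ) ≃ₗ[ℂ] (Fin 2 → ℂ) := b₁.equiv b₂ (Equiv.refl _)
  have hTv : T v₁ = v₂ := by
    rw [← hb₁0, ← hb₂0]
    exact b₁.equiv_apply 0 b₂ (Equiv.refl _)
  have hTw : T w₁ = w₂ := by
    rw [← hb₁1, ← hb₂1]
    exact b₁.equiv_apply 1 b₂ (Equiv.refl _)
  have hext : ∀ g : QuaternionGroup 3,
      T (ρ₁ g v₁) = ρ₂ g (T v₁) → T (ρ₁ g w₁) = ρ₂ g (T w₁) →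
      ∀ x, T (ρ₁ g x) = ρ₂ g (T x) := by
    intro g h1 h2 x
    have : (T : (Fin 2 → ℂ) →ₗ[ℂ] (Fin 2 → ℂ)) ∘ₗ (ρ₁ g)
        = (ρ₂ g) ∘ₗ (T : (Fin 2 → ℂ) →ₗ[ℂ] (Fin 2 → ℂ)) := by
      apply b₁.ext
      intro i
      fin_cases i
      · rw [show b₁ ⟨0, by norm_num⟩ = v₁ from hb₁0]
        simp only [LinearMap.coe_comp, Function.comp_apply, LinearEquiv.coe_coe]
        exact h1
      · rw [show b₁ ⟨1, by norm_num⟩ = w₁ from hb₁1]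
        simp only [LinearMap.coe_comp, Function.comp_apply, LinearEquiv.coe_coe]
        exact h2
    simpa using LinearMap.congr_fun this x
  refine ⟨T, ?_⟩
  refine QG3.gen_prop (fun g => ∀ x, T (ρ₁ g x) = ρ₂ g (T x)) ?_ ?_ ?_ ?_
  · intro g h hg hh x
    rw [map_mul, map_mul, Module.End.mul_apply, Module.End.mul_apply, hg, hh]
  · intro x; simp
  · refine hext _ ?_ ?_
    · rw [hA₁v, hTv, hA₂v, map_smul, hTv]
    · rw [hA₁w, hTw, hA₂w, map_smul, hTw]
  · refine hext _ ?_ ?_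
    · rw [hB₁v, hTv, hB₂v, hTw]
    · rw [hB₁w, hTw, hB₂w, map_neg, hTv]

/-- Any two faithful irreducible 2-dimensional complex representations `ρ₁`, `ρ₂`
of the dicyclic group of order 12 (Mathlib's `QuaternionGroup 3`) are
isomorphic: there is a `ℂ`-linear automorphism `T` of `ℂ²` with
`T ∘ ρ₁ g = ρ₂ g ∘ T` for all `g`. -/
theorem quaternionGroup_three_faithful_irreducible_two_dim_rep_unique
    (ρ₁ ρ₂ : Representation ℂ (QuaternionGroup 3) (Fin 2 → ℂ))
    (h₁faithful : Function.Injective ρ₁)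
    (h₁irred : ∀ p : Submodule ℂ (Fin 2 → ℂ),
      (∀ g : QuaternionGroup 3, ∀ x ∈ p, ρ₁ g x ∈ p) → p = ⊥ ∨ p = ⊤)
    (h₂faithful : Function.Injective ρ₂)
    (h₂irred : ∀ p : Submodule ℂ (Fin 2 → ℂ),
      (∀ g : QuaternionGroup 3, ∀ x ∈ p, ρ₂ g x ∈ p) → p = ⊥ ∨ p = ⊤) :
    ∃ T : (Fin 2 → ℂ) ≃ₗ[ℂ] (Fin 2 → ℂ),
      ∀ (g : QuaternionGroup 3) (x : Fin 2 → ℂ), T (ρ₁ g x) = ρ₂ g (T x) := by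
  obtain ⟨μ₁, v₁, w₁, h₁3, h₁q, hi₁, hA₁v, hA₁w, hB₁v, hB₁w⟩ :=
    QG3.key ρ₁ h₁faithful h₁irred
  obtain ⟨μ₂, v₂, w₂, h₂3, h₂q, hi₂, hA₂v, hA₂w, hB₂v, hB₂w⟩ :=
    QG3.key ρ₂ h₂faithful h₂irred
  have h16 : μ₁ ^ 6 = 1 := by linear_combination (μ₁ ^ 3 - 1) * h₁3
  have hcase : μ₂ = μ₁ ∨ μ₂ = μ₁ ^ 5 := by
    have key2 : (μ₂ ^ 2 - μ₁ ^ 2) * (μ₂ ^ 2 - μ₁ ^ 4) = 0 := by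
      linear_combination h₂q - μ₂ ^ 2 * h₁q + h16
    rcases mul_eq_zero.mp key2 with h | h
    · left
      have h' : μ₂ ^ 2 = μ₁ ^ 2 := sub_eq_zero.mp h
      linear_combination μ₂ * h₂3 - μ₁ * h₁3 - (μ₂ ^ 2 + μ₁ ^ 2) * h'
    · right
      have h' : μ₂ ^ 2 = μ₁ ^ 4 := sub_eq_zero.mp h
      linear_combination μ₂ * h₂3 - μ₁ ^ 5 * h₁3 - (μ₂ ^ 2 + μ₁ ^ 4) * h'
  rcases hcase with h | h
  · rw [h] at hA₂v hA₂w
    exact QG3.build ρ₁ ρ₂ μ₁ v₁ w₁ v₂ w₂ hi₁ hi₂ hA₁v hA₁w hB₁v hB₁w hA₂v hA₂w hB₂v hB₂w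
  · have h55 : μ₂ ^ 5 = μ₁ := by
      rw [h]
      linear_combination (μ₁ ^ 19 + μ₁ ^ 13 + μ₁ ^ 7 + μ₁) * h16
    refine QG3.build ρ₁ ρ₂ μ₁ v₁ w₁ w₂ (-v₂) hi₁ (QG3.swap_indep hi₂)
      hA₁v hA₁w hB₁v hB₁w ?_ ?_ ?_ ?_
    · rw [hA₂w, h55]
    · rw [map_neg, hA₂v, h, smul_neg]
    · exact hB₂w
    · rw [map_neg, hB₂v]
end
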